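/- (Corollary 2) For every k ∈ ℕ and every n ∈ ℤ, f(n−k, x, q^k·s) = (f(k−1, x, q·s)·f(n, x, s) − f(k, x, s)·f(n−1, x, q·s)) / v(k), where v(k) = (−1)^k · q^{binom(k,2)} · s^{k−1}. -/

import Mathlib

open Finset

variable {K : Type*} [Field K]

noncomputable def qFibPos (q x t : K) : ℕ → K
  | 0 => 0
  | 1 => 1
  | n + 2 => x * qFibPos q x t (n + 1) + q ^ n * t * qFibPos q x t n

noncomputable def qFibNeg (q x t : K) : ℕ → K
  | 0 => 0
  | 1 => q / t
  | m + 2 => (qFibNeg q x t m - x * qFibNeg q x t (m + 1)) * q ^ (m + 2) / t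

/-- The Carlitz q-Fibonacci polynomial `f(n, x, t)` for `n : ℤ`, defined by `f 0 = 0`,
`f 1 = 1` and `f n = x * f (n-1) + q^(n-2) * t * f (n-2)`, solved backwards for `n < 0`. -/
noncomputable def qFib (q x t : K) : ℤ → K
  | Int.ofNat n => qFibPos q x t n
  | Int.negSucc m => qFibNeg q x t (m + 1)

/-! Both sides, as functions of `n`, solve `g (n + 2) = x * g (n + 1) + q ^ n * s * g n`: the left
side because `q ^ (n - k) * (q ^ k * s) = q ^ n * s`, the right side as a linear combination of
`f(n, s)` and `f(n - 1, q s)`. Such a solution is determined by two consecutive values, and the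
sides agree at `n = k` and `n = k + 1`. At `k + 1` this is the Casoratian of `f(· - 1, q s)` and
`f(·, s)` at `k`, which is `s⁻¹` at `k = 0` and gets multiplied by `-q ^ k * s` at each step. -/

def casoratian (a b : ℤ → K) (n : ℤ) : K := a n * b (n + 1) - b n * a (n + 1)

def SolvesRecurrence (p r a : ℤ → K) : Prop :=
  ∀ n, a (n + 2) = p n * a (n + 1) + r n * a n

namespace SolvesRecurrence

variable {p r a b : ℤ → K}

theorem linearCombination (ha : SolvesRecurrence p r a) (hb : SolvesRecurrence p r b) (α β : K) :
    SolvesRecurrence p r (fun n => α * a n + β * b n) := by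
  intro n
  simp only [ha n, hb n]
  ring

theorem eq_of_eq_of_eq_add_one (hr : ∀ n, r n ≠ 0) (ha : SolvesRecurrence p r a)
    (hb : SolvesRecurrence p r b) (m : ℤ) (h₀ : a m = b m) (h₁ : a (m + 1) = b (m + 1)) :
    a = b := by
  have key (n : ℤ) : a n = b n ∧ a (n + 1) = b (n + 1) := by
    induction n using Int.inductionOn' (b := m) with
    | zero => exact ⟨h₀, h₁⟩
    | succ k _ ih =>
      refine ⟨ih.2, ?_⟩
      rw [add_assoc, one_add_one_eq_two, ha, hb, ih.1, ih.2]
    | pred k _ ih =>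
      refine ⟨?_, by rw [sub_add_cancel]; exact ih.1⟩
      have hak := ha (k - 1)
      have hbk := hb (k - 1)
      rw [show k - 1 + 2 = k + 1 by ring, sub_add_cancel] at hak hbk
      refine mul_left_cancel₀ (hr (k - 1)) ?_
      linear_combination ih.2 - hak + hbk - p (k - 1) * ih.1
  exact funext fun n => (key n).1

theorem casoratian_add_one (ha : SolvesRecurrence p r a) (hb : SolvesRecurrence p r b) (n : ℤ) :
    casoratian a b (n + 1) = -r n * casoratian a b n := by
  simp only [casoratian, add_assoc, one_add_one_eq_two, ha n, hb n]
  ring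

end SolvesRecurrence

section qFib

variable (q x t : K)

theorem qFib_zero : qFib q x t 0 = 0 := rfl

theorem qFib_one : qFib q x t 1 = 1 := rfl

theorem qFib_neg_one : qFib q x t (-1) = q / t := rfl

theorem qFib_neg_natCast (m : ℕ) : qFib q x t (-m) = qFibNeg q x t m := by
  cases m <;> rfl

theorem qFib_add_two (hq : q ≠ 0) (ht : t ≠ 0) (n : ℤ) :
    qFib q x t (n + 2) = x * qFib q x t (n + 1) + q ^ n * t * qFib q x t n := by
  rcases n with m | _ | j
  · show qFibPos q x t (m + 2) = _
    rw [Int.ofNat_eq_natCast, zpow_natCast]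
    rfl
  · show 1 = x * 0 + q ^ (-1 : ℤ) * t * (q / t)
    rw [mul_zero, zero_add, zpow_neg_one]
    field_simp
  · have e₂ : Int.negSucc (j + 1) + 2 = -(j : ℤ) := by omega
    have e₁ : Int.negSucc (j + 1) + 1 = -((j + 1 : ℕ) : ℤ) := by omega
    have e₀ : Int.negSucc (j + 1) = -((j + 2 : ℕ) : ℤ) := by omega
    rw [e₂, e₁, e₀, qFib_neg_natCast, qFib_neg_natCast, qFib_neg_natCast, qFibNeg, zpow_neg,
      zpow_natCast]
    field_simp
    ring

theorem qFib_solvesRecurrence (hq : q ≠ 0) (ht : t ≠ 0) :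
    SolvesRecurrence (fun _ => x) (fun n => q ^ n * t) (qFib q x t) :=
  qFib_add_two q x t hq ht

end qFib

section shift

variable {q : K} (x : K) {s : K}

theorem qFib_shift_solvesRecurrence (hq : q ≠ 0) (hs : s ≠ 0) (k : ℕ) :
    SolvesRecurrence (fun _ => x) (fun n => q ^ n * s)
      (fun n => qFib q x (q ^ k * s) (n - k)) := by
  intro n
  have hqk : q ^ (n - k) * (q ^ k * s) = q ^ n * s := by
    rw [← zpow_natCast, ← mul_assoc, ← zpow_add₀ hq, sub_add_cancel]
  simp only
  rw [show n + 2 - k = n - k + 2 by ring, show n + 1 - k = n - k + 1 by ring,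
    qFib_add_two q x _ hq (mul_ne_zero (pow_ne_zero k hq) hs), hqk]

theorem qFib_pred_solvesRecurrence (hq : q ≠ 0) (hs : s ≠ 0) :
    SolvesRecurrence (fun _ => x) (fun n => q ^ n * s) (fun n => qFib q x (q * s) (n - 1)) := by
  simpa only [pow_one, Nat.cast_one] using qFib_shift_solvesRecurrence x hq hs 1

theorem casoratian_qFib (hq : q ≠ 0) (hs : s ≠ 0) (k : ℕ) :
    casoratian (fun n => qFib q x (q * s) (n - 1)) (qFib q x s) k =
      (-1) ^ k * q ^ k.choose 2 * s ^ ((k : ℤ) - 1) := by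
  induction k with
  | zero =>
    simp only [casoratian, Nat.cast_zero, zero_sub, zero_add, sub_self,
      qFib_neg_one, qFib_one, qFib_zero]
    field_simp
    simp
  | succ k ih =>
    rw [Nat.cast_succ, (qFib_pred_solvesRecurrence x hq hs).casoratian_add_one
      (qFib_solvesRecurrence q x s hq hs), ih, Nat.choose_succ_succ', Nat.choose_one_right,
      add_sub_cancel_right, zpow_sub_one₀ hs, zpow_natCast]
    field_simp
    ring

end shift

theorem qFib_shift_representation (q x s : K) (hq : q ≠ 0) (hs : s ≠ 0) (k : ℕ) (n : ℤ) :
    qFib q x (q ^ k * s) (n - k) =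
      (qFib q x (q * s) ((k : ℤ) - 1) * qFib q x s n -
        qFib q x s (k : ℤ) * qFib q x (q * s) (n - 1)) /
      ((-1 : K) ^ k * q ^ (k.choose 2) * s ^ ((k : ℤ) - 1)) := by
  set F := qFib q x s
  set G : ℤ → K := fun n => qFib q x (q * s) (n - 1)
  set v : K := (-1) ^ k * q ^ k.choose 2 * s ^ ((k : ℤ) - 1) with hv
  have hv₀ : v ≠ 0 := mul_ne_zero (mul_ne_zero (by simp) (pow_ne_zero _ hq)) (zpow_ne_zero _ hs)
  have hR : SolvesRecurrence (fun _ => x) (fun n => q ^ n * s)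
      (fun n => (G k * F n - F k * G n) / v) := by
    convert (qFib_solvesRecurrence q x s hq hs).linearCombination
      (qFib_pred_solvesRecurrence x hq hs) (G k / v) (-F k / v) using 1
    funext n
    ring
  refine congrFun ((qFib_shift_solvesRecurrence x hq hs k).eq_of_eq_of_eq_add_one
    (fun n => mul_ne_zero (zpow_ne_zero n hq) hs) hR k ?_ ?_) n
  · rw [sub_self, qFib_zero, mul_comm (G k), sub_self, zero_div]
  · rw [add_sub_cancel_left, qFib_one, eq_div_iff hv₀, one_mul, hv,
      ← casoratian_qFib x hq hs k]
    rfl
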